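/- arXiv:1902.03410 — 3 statements merged into one kernel-verified Lean document; each statement's English description precedes it below -/
import Mathlib

section
/- Let V be a finite nonempty set, let F : ℝ^V → ℝ be convex and strictly convex orthogonal to consensus, and let ψ : V → V be a bijection such that F(y ∘ ψ) = F(y) for all y ∈ ℝ^V, where (y ∘ ψ)_i = y_{ψ(i)}. If y* ∈ ℝ^V is a global minimizer of F, i.e. F(y*) ≤ F(y) for all y ∈ ℝ^V, then y*_{ψ(i)} = y*_i for every i ∈ V. -/
theorem stmt6 {V : Type*} [Fintype V] [DecidableEq V] [Nonempty V]
    (F : (V → ℝ) → ℝ)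
    (hconv : ConvexOn ℝ Set.univ F)
    (hstrict : ∀ x z : V → ℝ, x ≠ z → (∑ i, x i) = (∑ i, z i) → ∀ s : ℝ, 0 < s → s < 1 →
      F (s • x + (1 - s) • z) < s * F x + (1 - s) * F z)
    (ψ : Equiv.Perm V)
    (hinv : ∀ y : V → ℝ, F (fun i => y (ψ i)) = F y)
    (ystar : V → ℝ) (hmin : ∀ y : V → ℝ, F ystar ≤ F y) :
    ∀ i, ystar (ψ i) = ystar i := by
  have hx : (fun i => ystar (ψ i)) = ystar := by
    by_contra hne
    have hsum : (∑ i, ystar (ψ i)) = ∑ i, ystar i :=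
      Fintype.sum_equiv ψ _ _ (fun i => rfl)
    have h := hstrict (fun i => ystar (ψ i)) ystar hne hsum (1/2) (by norm_num) (by norm_num)
    have hF : F (fun i => ystar (ψ i)) = F ystar := hinv ystar
    rw [hF] at h
    have h2 : F ((1/2 : ℝ) • (fun i => ystar (ψ i)) + (1 - 1/2 : ℝ) • ystar) < F ystar := by
      linarith
    exact absurd (hmin _) (not_le.mpr h2)
  intro i
  exact congrFun hx i
end

section
/- Let V be a finite nonempty set, let S be a subgroup of the group of permutations of V, and let H be the exchangeability graph of S. Let F : ℝ^V → ℝ be convex and strictly convex orthogonal to consensus, and suppose F(y ∘ ψ) = F(y) for every ψ ∈ S and y ∈ ℝ^V, where (y ∘ ψ)_i = y_{ψ(i)}. If y* ∈ ℝ^V is a global minimizer of F, then y* is constant on every connected component of H: for any i, j ∈ V joined by a walk in H, y*_i = y*_j. -/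
/-!
Strict convexity on each hyperplane `∑ i, x i = c` makes the minimizer of `F` on it unique.
Since `F` is `S`-invariant and permuting coordinates preserves the sum, `y* ∘ ψ` is another
minimizer on the hyperplane through `y*`, so `y* ∘ ψ = y*` for every `ψ ∈ S`; hence `y*` is
constant along the edges, and so on the components, of the exchangeability graph.
-/

/-- The exchangeability graph of a subgroup `S` of permutations of `V`:
distinct vertices `i ≠ j` are adjacent iff some `ψ ∈ S` maps `i` to `j`. -/
def exchangeabilityGraph {V : Type*} (S : Subgroup (Equiv.Perm V)) : SimpleGraph V where
  Adj i j := i ≠ j ∧ ∃ ψ ∈ S, ψ i = j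
  symm := by
    constructor
    rintro i j ⟨hne, ψ, hS, hψ⟩
    exact ⟨hne.symm, ψ⁻¹, S.inv_mem hS, by simp [← hψ]⟩
  loopless := by constructor; rintro i ⟨hne, -⟩; exact hne rfl

theorem SimpleGraph.Reachable.apply_eq_of_forall_adj {V α : Type*} {G : SimpleGraph V}
    {f : V → α} (hf : ∀ u v, G.Adj u v → f u = f v) {u v : V} (h : G.Reachable u v) :
    f u = f v := by
  rw [SimpleGraph.reachable_eq_reflTransGen] at h
  induction h with
  | refl => rfl
  | tail _ hadj ih => exact ih.trans (hf _ _ hadj)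

theorem exchangeabilityGraph_reachable_apply_eq {V α : Type*} {S : Subgroup (Equiv.Perm V)}
    {f : V → α} (hf : ∀ ψ ∈ S, ∀ i, f (ψ i) = f i) {i j : V}
    (h : (exchangeabilityGraph S).Reachable i j) : f i = f j :=
  h.apply_eq_of_forall_adj fun _ _ hadj ↦ by
    obtain ⟨-, ψ, hψ, rfl⟩ := hadj
    exact (hf ψ hψ _).symm

theorem strictConvexOn_sum_eq {V : Type*} [Fintype V] {F : (V → ℝ) → ℝ}
    (hstrict : ∀ x z : V → ℝ, x ≠ z → (∑ i, x i) = (∑ i, z i) → ∀ s : ℝ, 0 < s → s < 1 →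
      F (s • x + (1 - s) • z) < s * F x + (1 - s) * F z) (c : ℝ) :
    StrictConvexOn ℝ {x | ∑ i, x i = c} F := by
  refine ⟨convex_hyperplane ⟨fun x y ↦ Finset.sum_add_distrib, fun a x ↦ ?_⟩ c, ?_⟩
  · simp [Finset.mul_sum]
  · rintro x hx z hz hxz a b ha hb hab
    obtain rfl : b = 1 - a := by linarith
    exact hstrict x z hxz (hx.trans hz.symm) a ha (by linarith)

theorem stmt8_general {V : Type*} [Fintype V]
    (S : Subgroup (Equiv.Perm V))
    (F : (V → ℝ) → ℝ)
    (hstrict : ∀ x z : V → ℝ, x ≠ z → (∑ i, x i) = (∑ i, z i) → ∀ s : ℝ, 0 < s → s < 1 →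
      F (s • x + (1 - s) • z) < s * F x + (1 - s) * F z)
    (hinv : ∀ ψ ∈ S, ∀ y : V → ℝ, F (fun i => y (ψ i)) = F y)
    (ystar : V → ℝ) (hmin : ∀ y : V → ℝ, F ystar ≤ F y) :
    ∀ i j : V, (exchangeabilityGraph S).Reachable i j → ystar i = ystar j := by
  have hfix : ∀ ψ ∈ S, ∀ i, ystar (ψ i) = ystar i := by
    intro ψ hψ
    have hsum : ∑ i, ystar (ψ i) = ∑ i, ystar i := Equiv.sum_comp ψ ystar
    refine congrFun ((strictConvexOn_sum_eq hstrict _).eq_of_isMinOn ?_ ?_ hsum rfl)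
    · exact fun y _ ↦ (hinv ψ hψ ystar).trans_le (hmin y)
    · exact fun y _ ↦ hmin y
  exact fun i j ↦ exchangeabilityGraph_reachable_apply_eq hfix

theorem stmt8 {V : Type*} [Fintype V] [DecidableEq V] [Nonempty V]
    (S : Subgroup (Equiv.Perm V))
    (F : (V → ℝ) → ℝ)
    (hconv : ConvexOn ℝ Set.univ F)
    (hstrict : ∀ x z : V → ℝ, x ≠ z → (∑ i, x i) = (∑ i, z i) → ∀ s : ℝ, 0 < s → s < 1 →
      F (s • x + (1 - s) • z) < s * F x + (1 - s) * F z)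
    (hinv : ∀ ψ ∈ S, ∀ y : V → ℝ, F (fun i => y (ψ i)) = F y)
    (ystar : V → ℝ) (hmin : ∀ y : V → ℝ, F ystar ≤ F y) :
    ∀ i j : V, (exchangeabilityGraph S).Reachable i j → ystar i = ystar j :=
  stmt8_general S F hstrict hinv ystar hmin
end

section
/- Let (V,E,h,t) be an oriented graph that is connected, in the sense that any y : V → ℝ with y_{h(e)} = y_{t(e)} for all e ∈ E is constant. Let K₀ : ℝ → ℝ be convex, and for each e ∈ E let Γ_e : ℝ → ℝ be strictly convex with Γ_e(0) ≤ Γ_e(x) for all x ∈ ℝ. Define F : ℝ^V → ℝ by F(y) = Σ_{i∈V} K₀(y_i) + Σ_{e∈E} Γ_e(y_{h(e)} − y_{t(e)}). Then every global minimizer y* of F is a consensus vector: there exists c ∈ ℝ such that y*_i = c for all i ∈ V. -/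
theorem stmt10 {V E : Type*} [Fintype V] [Fintype E] [DecidableEq V] [DecidableEq E]
    [Nonempty V] [Nonempty E]
    (h t : E → V) (hht : ∀ e, h e ≠ t e)
    (hconn : ∀ y : V → ℝ, (∀ e, y (h e) = y (t e)) → ∀ i j : V, y i = y j)
    (K₀ : ℝ → ℝ) (hK₀ : ConvexOn ℝ Set.univ K₀)
    (Γ : E → ℝ → ℝ)
    (hΓstrict : ∀ e, ∀ x z : ℝ, x ≠ z → ∀ s : ℝ, 0 < s → s < 1 →
      Γ e (s * x + (1 - s) * z) < s * Γ e x + (1 - s) * Γ e z)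
    (hΓmin : ∀ e, ∀ x : ℝ, Γ e 0 ≤ Γ e x)
    (F : (V → ℝ) → ℝ)
    (hF : ∀ y : V → ℝ, F y = (∑ i, K₀ (y i)) + ∑ e, Γ e (y (h e) - y (t e)))
    (ystar : V → ℝ) (hmin : ∀ y : V → ℝ, F ystar ≤ F y) :
    ∃ c : ℝ, ∀ i : V, ystar i = c := by
  -- It suffices to show every edge difference is zero
  by_cases hall : ∀ e, ystar (h e) = ystar (t e)
  · obtain ⟨i₀⟩ := (inferInstance : Nonempty V)
    exact ⟨ystar i₀, fun i => hconn ystar hall i i₀⟩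
  · exfalso
    push_neg at hall
    obtain ⟨e₀, he₀⟩ := hall
    -- pick i₀ minimizing K₀ (ystar i)
    obtain ⟨i₀, -, hi₀⟩ := Finset.exists_min_image Finset.univ (fun i => K₀ (ystar i))
      ⟨Classical.arbitrary V, Finset.mem_univ _⟩
    set M : V → ℝ := fun i => (1/2 : ℝ) * ystar i + (1/2 : ℝ) * ystar i₀ with hM
    -- Γ e (d/2) ≤ Γ e d, strict when d ≠ 0
    have key : ∀ e : E, ∀ d : ℝ, d ≠ 0 →
        Γ e ((1/2 : ℝ) * d) < Γ e d := by
      intro e d hd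
      have h1 := hΓstrict e d 0 hd (1/2) (by norm_num) (by norm_num)
      have h2 := hΓmin e ((1/2 : ℝ) * d)
      have h3 : Γ e ((1/2 : ℝ) * d) < (1/2) * Γ e d + (1 - 1/2) * Γ e 0 := by
        simpa using h1
      linarith
    -- K₀ sums
    have hKsum : ∑ i, K₀ (M i) ≤ ∑ i, K₀ (ystar i) := by
      apply Finset.sum_le_sum
      intro i _
      have hc := hK₀.2 (Set.mem_univ (ystar i)) (Set.mem_univ (ystar i₀))
        (by norm_num : (0:ℝ) ≤ 1/2) (by norm_num : (0:ℝ) ≤ 1/2) (by norm_num)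
      have hi := hi₀ i (Finset.mem_univ i)
      simp only [smul_eq_mul] at hc
      calc K₀ (M i) ≤ 1/2 * K₀ (ystar i) + 1/2 * K₀ (ystar i₀) := hc
        _ ≤ 1/2 * K₀ (ystar i) + 1/2 * K₀ (ystar i) := by linarith
        _ = K₀ (ystar i) := by ring
    -- Γ sums
    have hdiff : ∀ e : E, M (h e) - M (t e) =
        (1/2 : ℝ) * (ystar (h e) - ystar (t e)) := by
      intro e; simp only [hM]; ring
    have hΓsum : ∑ e, Γ e (M (h e) - M (t e)) < ∑ e, Γ e (ystar (h e) - ystar (t e)) := by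
      refine Finset.sum_lt_sum (fun e _ => ?_) ⟨e₀, Finset.mem_univ e₀, ?_⟩
      · rw [hdiff e]
        by_cases hd : ystar (h e) - ystar (t e) = 0
        · rw [hd]; norm_num
        · exact le_of_lt (key e _ hd)
      · rw [hdiff e₀]
        exact key e₀ _ (sub_ne_zero_of_ne he₀)
    have : F M < F ystar := by
      rw [hF M, hF ystar]
      linarith
    exact absurd (hmin M) (not_le.mpr this)
end
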